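/- For ν ∈ ℝ and ζ ∈ ℂ define the 2×2 complex matrix H(ν,ζ) with entries H₁₁ = 1 + ν(ζ − 1), H₁₂ = √3 ν(1 − ν)(ζ − 1), H₂₁ = √3 ν(1 − ζ), H₂₂ = 1 − 3ν(ζ + 1) + 3ν²(ζ − 1). Then for every ν ∈ (1/3, 1] there exists ζ ∈ ℂ with |ζ| = 1 and an eigenvalue λ of H(ν,ζ) with |λ| > 1. (Hence the piecewise-linear LxW-DG scheme is von Neumann unstable for CFL numbers exceeding 1/3; indeed the maximum eigenvalue modulus over the unit circle equals max(1, |1 − 6ν|).) -/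
import Mathlib


/-- The von Neumann amplification matrix of the piecewise-linear Lax–Wendroff DG scheme. -/
noncomputable def lxwDGAmpMatrix (ν : ℝ) (ζ : ℂ) : Matrix (Fin 2) (Fin 2) ℂ :=
  !![1 + (ν : ℂ) * (ζ - 1),
     (Real.sqrt 3 : ℂ) * (ν : ℂ) * (1 - (ν : ℂ)) * (ζ - 1);
     (Real.sqrt 3 : ℂ) * (ν : ℂ) * (1 - ζ),
     1 - 3 * (ν : ℂ) * (ζ + 1) + 3 * (ν : ℂ) ^ 2 * (ζ - 1)]

/-- The piecewise-linear LxW-DG scheme is von Neumann unstable for CFL numbers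
`1/3 < ν ≤ 1`. -/
theorem lxwDG_unstable (ν : ℝ) (hν : ν ∈ Set.Ioc (1 / 3 : ℝ) 1) :
    ∃ ζ : ℂ, ‖ζ‖ = 1 ∧ ∃ lam ∈ spectrum ℂ (lxwDGAmpMatrix ν ζ), 1 < ‖lam‖ := by
  obtain ⟨h13, h1⟩ := hν
  refine ⟨1, by simp, ((1 : ℂ) - 6 * ν), ?_, ?_⟩
  · rw [spectrum.mem_iff]
    intro h
    rw [Matrix.isUnit_iff_isUnit_det] at h
    apply h.ne_zero
    have : (algebraMap ℂ (Matrix (Fin 2) (Fin 2) ℂ)) ((1 : ℂ) - 6 * ν) - lxwDGAmpMatrix ν 1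
        = !![-(6 * (ν:ℂ)), 0; 0, 0] := by
      rw [lxwDGAmpMatrix, Algebra.algebraMap_eq_smul_one]
      ext i j
      fin_cases i <;> fin_cases j <;>
        simp [Matrix.smul_apply, Matrix.one_apply] <;> ring
    rw [this, Matrix.det_fin_two_of]
    ring
  · have : ((1 : ℂ) - 6 * ν) = ((1 - 6 * ν : ℝ) : ℂ) := by push_cast; ring
    rw [this, Complex.norm_real, Real.norm_eq_abs, abs_of_neg (by linarith)]
    linarith
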